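/- For every i with 1 ≤ i ≤ n+1, the pointwise product M_{i+1} · M_1⁻¹ is the constant function on V with value y_i = e^{e_i}; that is, M_{i+1}(j) · (M_1(j))⁻¹ = y_i in R for all j ∈ V. -/

import Mathlib

noncomputable section

/-- Standard basis vector `e_k` of `ℤ^{n+1}` (1-indexed), with `e 0 = 0`. -/
def ee (n k : ℕ) : Fin (n+1) → ℤ := fun t => if (t : ℕ) + 1 = k then 1 else 0

/-- The function `h : V → ℤ^{n+1}`. -/
def hh (n j : ℕ) : Fin (n+1) → ℤ :=
  if j ≤ n+2 then ee n (j-1) - ee n (n+1) else ee n n - ee n (2*n+2-j)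

/-- The Laurent polynomial ring `R = ℤ[y₁^{±1},…,y_{n+1}^{±1}]`. -/
abbrev Rg (n : ℕ) : Type := AddMonoidAlgebra ℤ (Fin (n+1) → ℤ)

/-- The monomial `e^w`. -/
def ex (n : ℕ) (w : Fin (n+1) → ℤ) : Rg n := AddMonoidAlgebra.single w 1

/-- `ī = 2n+3-i`. -/
def bar (n i : ℕ) : ℕ := 2*n+3 - i

/-- Membership in the vertex set `V = {1,…,2n+2}`. -/
def memV (n i : ℕ) : Prop := 1 ≤ i ∧ i ≤ 2*n+2

/-- The axial function `α(i,j) = h(j) - h(i)`. -/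
def axl (n i j : ℕ) : Fin (n+1) → ℤ := hh n j - hh n i

/-- The K-class `M_v`. -/
def Mv (n v : ℕ) (l : ℕ) : Rg n :=
  if l = v then 1
  else if l = bar n v then ex n (ee n n - ee n (n+1) - (2:ℤ) • hh n (bar n v))
  else ex n (hh n v - hh n l)

/-- The pointwise inverse `M_v⁻¹`. -/
def MvInv (n v : ℕ) (l : ℕ) : Rg n :=
  if l = v then 1
  else if l = bar n v then ex n (-(ee n n - ee n (n+1) - (2:ℤ) • hh n (bar n v)))
  else ex n (hh n l - hh n v)

/-- A subset `P ⊆ V` is admissible if it is nonempty and contains no pair `{i, ī}`. -/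
def admissible (n : ℕ) (P : Finset ℕ) : Prop :=
  P.Nonempty ∧ (∀ i ∈ P, memV n i) ∧ (∀ i ∈ P, bar n i ∉ P)

/-- The vertex set as a finset. -/
def Vfin (n : ℕ) : Finset ℕ := Finset.Icc 1 (2*n+2)

/-- The Thom class `Δ_P`. -/
def Dl (n : ℕ) (P : Finset ℕ) (l : ℕ) : Rg n :=
  if l ∈ P then
    ∏ k ∈ (Vfin n).filter (fun k => k ∉ P ∧ k ≠ bar n l), (1 - ex n (axl n l k))
  else 0

/-- `φ : V → R` is a K-class if `1 - e^{α(i,j)}` divides `φ(i) - φ(j)` for every edge `(i,j)`. -/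
def isKClass (n : ℕ) (f : ℕ → Rg n) : Prop :=
  ∀ i j : ℕ, memV n i → memV n j → j ≠ i → j ≠ bar n i →
    (1 - ex n (axl n i j)) ∣ (f i - f j)

/-
Every value of `M_v` is the monomial `e^{h(v) - h(l)}`: at `l = v` this is `e^0 = 1`, and at
`l = v̄` it is the identity `h(v) + h(v̄) = e_n - e_{n+1}`. Hence `M_v · M_w⁻¹` is the constant
`e^{h(v) - h(w)}`, and `h(i+1) - h(1) = e_i`.
-/

theorem ex_zero (n : ℕ) : ex n 0 = 1 := rfl

theorem ex_add (n : ℕ) (a b : Fin (n+1) → ℤ) : ex n (a + b) = ex n a * ex n b := by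
  simp [ex, AddMonoidAlgebra.single_mul_single]

theorem ee_apply (n k : ℕ) (t : Fin (n+1)) : ee n k t = if (t : ℕ) + 1 = k then 1 else 0 := rfl

theorem hh_apply (n j : ℕ) (t : Fin (n+1)) :
    hh n j t = if j ≤ n+2 then ee n (j-1) t - ee n (n+1) t else ee n n t - ee n (2*n+2-j) t := by
  unfold hh
  split_ifs <;> rfl

theorem hh_add_hh_bar (n v : ℕ) : hh n v + hh n (bar n v) = ee n n - ee n (n+1) := by
  funext t
  simp only [Pi.add_apply, Pi.sub_apply, hh_apply, ee_apply, bar]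
  grind

theorem hh_succ_sub_hh_one (n i : ℕ) (hi : i ≤ n+1) : hh n (i+1) - hh n 1 = ee n i := by
  funext t
  simp only [Pi.sub_apply, hh_apply, ee_apply]
  grind

theorem Mv_eq_ex (n v l : ℕ) : Mv n v l = ex n (hh n v - hh n l) := by
  unfold Mv
  split_ifs with hv hbar
  · rw [hv, sub_self, ex_zero]
  · rw [hbar, ← hh_add_hh_bar n v]
    congr 1
    module
  · rfl

theorem MvInv_eq_ex (n v l : ℕ) : MvInv n v l = ex n (hh n l - hh n v) := by
  unfold MvInv
  split_ifs with hv hbar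
  · rw [hv, sub_self, ex_zero]
  · rw [hbar, ← hh_add_hh_bar n v]
    congr 1
    module
  · rfl

theorem Mv_mul_MvInv (n v w l : ℕ) : Mv n v l * MvInv n w l = ex n (hh n v - hh n w) := by
  rw [Mv_eq_ex, MvInv_eq_ex, ← ex_add, sub_add_sub_cancel]

theorem Mv_mul_MvInv_one_general (n : ℕ) (i : ℕ) (hi2 : i ≤ n+1)
    (j : ℕ) :
    Mv n (i+1) j * MvInv n 1 j = ex n (ee n i) := by
  rw [Mv_mul_MvInv, hh_succ_sub_hh_one n i hi2]

/-- For `1 ≤ i ≤ n+1`, the pointwise product `M_{i+1} · M_1⁻¹` is the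
constant function on `V` with value `y_i = e^{e_i}`. -/
theorem Mv_mul_MvInv_one (n : ℕ) (hn : 1 ≤ n) (i : ℕ) (hi1 : 1 ≤ i) (hi2 : i ≤ n+1)
    (j : ℕ) (hj : memV n j) :
    Mv n (i+1) j * MvInv n 1 j = ex n (ee n i) :=
  Mv_mul_MvInv_one_general n i hi2 j
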